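/- arXiv:2601.00392 — 4 statements merged into one kernel-verified Lean document; each statement's English description precedes it below -/
import Mathlib

section
/- Let C be a convex polygon in the plane all of whose vertices are points of the integer lattice ℤ², and let D ≥ 1 be its diameter. Then the number of vertices of C is at most 6·2^(1/3)·D^(2/3). -/
/-!
Every extreme point of `C` is the highest or the lowest point of `C` on its vertical line, so the
vertices form an upper and a lower chain. Sort a chain by abscissa. Its edge vectors `(a, b)`
have `a ≥ 1` and strictly decreasing slopes `b / a`, so they are pairwise distinct; and since
the `b` change sign only once, their total `ℓ¹`-length `∑ (a + |b|)` is at most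
width + 2 · height ≤ 3D. Only `s²` lattice vectors with `a ≥ 1` have `a + |b| ≤ s`, so `m`
distinct ones have total length at least `∑_{s ≤ √m} (m - s²)`; for the `m = k - 1` edges of a
chain of `k` points this gives `k³ ≤ 54 D²`. Two chains give at most `2 (54 D²)^(1/3) = 6 · 2^(1/3) · D^(2/3)` vertices.
-/

open Finset

noncomputable def latticeEmbed (z : ℤ × ℤ) : EuclideanSpace ℝ (Fin 2) :=
  (EuclideanSpace.equiv (Fin 2) ℝ).symm ![(z.1 : ℝ), (z.2 : ℝ)]

local notation "ℝ²" => EuclideanSpace ℝ (Fin 2)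

lemma card_filter_natAbs_add_natAbs_le_sq (V : Finset (ℤ × ℤ)) (hV : ∀ v ∈ V, 0 < v.1) (s : ℕ) :
    #{v ∈ V | v.1.natAbs + v.2.natAbs ≤ s} ≤ s ^ 2 := by
  -- Fold the triangle `a + |b| ≤ s` onto the square `[0, s)²`: the half with `b < 0` is
  -- transposed into the part strictly below the diagonal.
  let fold : ℤ × ℤ → ℤ × ℤ := fun v => if 0 ≤ v.2 then (s - v.1, v.2) else (-v.2 - 1, s - v.1)
  calc #{v ∈ V | v.1.natAbs + v.2.natAbs ≤ s}
      ≤ #(Ico (0 : ℤ) s ×ˢ Ico (0 : ℤ) s) := by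
        refine card_le_card_of_injOn fold (fun v hv => ?_) (fun v hv w hw hvw => ?_)
        · rw [mem_coe, mem_filter] at hv
          have := hV v hv.1
          simp only [fold, coe_product, coe_Ico, Set.mem_prod, Set.mem_Ico]
          split_ifs <;> omega
        · rw [mem_coe, mem_filter] at hv hw
          have := hV v hv.1
          have := hV w hw.1
          simp only [fold] at hvw
          split_ifs at hvw <;> simp only [Prod.mk.injEq] at hvw <;> ext <;> omega
    _ = s ^ 2 := by simp [sq]

lemma sum_card_sub_le_sum_of_card_filter_le {α : Type*} (V : Finset α) (n : α → ℕ) (g : ℕ → ℕ)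
    (hg : ∀ s, #{v ∈ V | n v ≤ s} ≤ g s) (T : ℕ) :
    ∑ s ∈ range T, ((#V : ℤ) - g s) ≤ ∑ v ∈ V, (n v : ℤ) := by
  have layer (s : ℕ) : (#V : ℤ) - g s ≤ #{v ∈ V | s < n v} := by
    have := card_filter_add_card_filter_not (s := V) (fun v => n v ≤ s)
    simp only [not_le] at this
    have := hg s
    omega
  have count (v : α) : #{s ∈ range T | s < n v} ≤ n v :=
    (card_le_card fun s hs => by simp_all).trans (card_range _).le
  calc ∑ s ∈ range T, ((#V : ℤ) - g s)
      ≤ ∑ s ∈ range T, (#{v ∈ V | s < n v} : ℤ) := sum_le_sum fun s _ => layer s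
    _ = ∑ v ∈ V, (#{s ∈ range T | s < n v} : ℤ) := by
        simp only [card_filter, Nat.cast_sum]
        exact sum_comm
    _ ≤ ∑ v ∈ V, (n v : ℤ) := sum_le_sum fun v _ => by exact_mod_cast count v

lemma sum_range_cast_sq (T : ℕ) :
    ∑ s ∈ range T, (s : ℝ) ^ 2 = (T - 1) * T * (2 * T - 1) / 6 := by
  induction T with
  | zero => simp
  | succ n ih => rw [sum_range_succ, ih]; push_cast; ring

lemma add_one_pow_three_le_of_sum_sub_sq_le (m : ℕ) (D : ℝ) (hD : 1 ≤ D)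
    (H : ∑ s ∈ range (m.sqrt + 1), ((m : ℝ) - s ^ 2) ≤ 3 * D) :
    ((m : ℝ) + 1) ^ 3 ≤ 54 * D ^ 2 := by
  rcases le_or_gt m 2 with hm | hm
  · have : (m : ℝ) + 1 ≤ 3 := by norm_cast; omega
    nlinarith [pow_le_pow_left₀ (by positivity) this 3]
  -- write `m = r² + e` with `r = ⌊√m⌋`, so that `0 ≤ e ≤ 2r`
  obtain ⟨r, e, hr, he, h3, rfl⟩ :
      ∃ r e : ℕ, 1 ≤ r ∧ e ≤ 2 * r ∧ 3 ≤ r ^ 2 + e ∧ r ^ 2 + e = m :=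
    ⟨m.sqrt, m - m.sqrt ^ 2, Nat.le_sqrt.2 (by omega),
      by have := Nat.lt_succ_sqrt' m; rw [tsub_le_iff_right]; nlinarith,
      by have := Nat.sqrt_le' m; omega, by have := Nat.sqrt_le' m; omega⟩
  rw [Nat.sqrt_add_eq' r (by omega), sum_sub_distrib, sum_const, card_range, sum_range_cast_sq,
    nsmul_eq_mul] at H
  have hr : (1 : ℝ) ≤ r := by exact_mod_cast hr
  have he : (e : ℝ) ≤ 2 * r := by exact_mod_cast he
  have he0 : (0 : ℝ) ≤ e := e.cast_nonneg
  have h3 : (3 : ℝ) ≤ r ^ 2 + e := by exact_mod_cast h3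
  have hsum : (((r + 1 : ℕ) : ℝ) * ((r ^ 2 + e : ℕ) : ℝ) -
      ((r + 1 : ℕ) - 1) * (r + 1 : ℕ) * (2 * (r + 1 : ℕ) - 1) / 6) =
      (r + 1) * (4 * r ^ 2 - r + 6 * e) / 6 := by
    push_cast; ring
  rw [hsum] at H
  have hpos : (0 : ℝ) ≤ (r + 1) * (4 * r ^ 2 - r + 6 * e) / 6 := by
    apply div_nonneg _ (by norm_num); apply mul_nonneg (by linarith); nlinarith
  push_cast
  calc ((r : ℝ) ^ 2 + e + 1) ^ 3 ≤ 6 * ((r + 1) * (4 * r ^ 2 - r + 6 * e) / 6) ^ 2 := by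
        nlinarith [mul_nonneg he0 (sq_nonneg (r : ℝ)), mul_nonneg (mul_nonneg he0 he0) he0,
          mul_nonneg he0 (sub_nonneg.2 hr), mul_nonneg (sub_nonneg.2 he) (sq_nonneg (r : ℝ))]
    _ ≤ 6 * (3 * D) ^ 2 := by gcongr
    _ = 54 * D ^ 2 := by ring

lemma add_one_pow_three_le_of_sum_le (V : Finset (ℤ × ℤ)) (hV : ∀ v ∈ V, 0 < v.1) (D : ℝ)
    (hD : 1 ≤ D) (hsum : ∑ v ∈ V, ((v.1 + |v.2| : ℤ) : ℝ) ≤ 3 * D) :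
    ((#V : ℝ) + 1) ^ 3 ≤ 54 * D ^ 2 := by
  apply add_one_pow_three_le_of_sum_sub_sq_le _ D hD
  have hnorm : ∑ v ∈ V, ((v.1.natAbs + v.2.natAbs : ℕ) : ℤ) = ∑ v ∈ V, (v.1 + |v.2|) :=
    sum_congr rfl fun v hv => by push_cast; rw [abs_of_pos (hV v hv)]
  have := sum_card_sub_le_sum_of_card_filter_le V _ _
    (card_filter_natAbs_add_natAbs_le_sq V hV) ((#V).sqrt + 1)
  rw [hnorm] at this
  exact le_trans (by exact_mod_cast this) hsum

lemma sum_abs_sub_eq_of_unimodal {G : Type*} [AddCommGroup G] [LinearOrder G]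
    [IsOrderedAddMonoid G] (y : ℕ → G) {p m : ℕ} (hpm : p ≤ m) (hup : ∀ i < p, y i ≤ y (i + 1))
    (hdown : ∀ i, p ≤ i → i < m → y (i + 1) ≤ y i) :
    ∑ i ∈ range m, |y (i + 1) - y i| = (y p - y 0) + (y p - y m) := by
  rw [← sum_range_add_sum_Ico _ hpm,
    sum_congr rfl fun i hi => abs_of_nonneg (sub_nonneg.2 (hup i (mem_range.1 hi))),
    sum_congr rfl fun i hi =>
      abs_of_nonpos (sub_nonpos.2 (hdown i (mem_Ico.1 hi).1 (mem_Ico.1 hi).2)),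
    sum_range_sub, sum_neg_distrib, sum_Ico_sub _ hpm, neg_sub]

lemma exists_sign_split_of_antitoneOn {β : Type*} [LinearOrder β] [Zero β] (σ : ℕ → β)
    {m : ℕ} (hσ : AntitoneOn σ (Set.Iio m)) :
    ∃ p ≤ m, (∀ i < p, 0 ≤ σ i) ∧ ∀ i, p ≤ i → i < m → σ i < 0 := by
  classical
  have hex : ∃ i, m ≤ i ∨ σ i < 0 := ⟨m, Or.inl le_rfl⟩
  refine ⟨Nat.find hex, Nat.find_min' hex (Or.inl le_rfl), fun i hi => ?_, fun i hi him => ?_⟩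
  · exact not_lt.1 fun h => Nat.find_min hex hi (Or.inr h)
  · have hp := (Nat.find_spec hex).resolve_left (by omega)
    exact (hσ (hi.trans_lt him) him hi).trans_lt hp

lemma add_one_pow_three_le_of_strictConcave_seq (m : ℕ) (w : ℕ → ℤ × ℤ) (D : ℝ) (hD : 1 ≤ D)
    (hx : ∀ i < m, (w i).1 < (w (i + 1)).1)
    (hconc : ∀ i, i + 1 < m → ((w (i + 1)).1 - (w i).1) * ((w (i + 2)).2 - (w (i + 1)).2) <
      ((w (i + 2)).1 - (w (i + 1)).1) * ((w (i + 1)).2 - (w i).2))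
    (hwidth : ((w m).1 : ℝ) - (w 0).1 ≤ D)
    (hheight : ∀ i ≤ m, ∀ j ≤ m, ((w i).2 : ℝ) - (w j).2 ≤ D) :
    ((m : ℝ) + 1) ^ 3 ≤ 54 * D ^ 2 := by
  set e : ℕ → ℤ × ℤ := fun i => w (i + 1) - w i with he
  have he1 (i : ℕ) (hi : i < m) : (0 : ℝ) < (e i).1 := by
    simpa [he, sub_pos] using hx i hi
  set σ : ℕ → ℝ := fun i => (e i).2 / (e i).1
  have hσ : StrictAntiOn σ (Set.Iic (m - 1)) := strictAntiOn_Iic_of_succ_lt fun i hi => by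
    have hi : i + 1 < m := by omega
    rw [Order.succ_eq_add_one, div_lt_div_iff₀ (he1 (i + 1) hi) (he1 i (by omega))]
    simp only [he, Prod.fst_sub, Prod.snd_sub]
    exact_mod_cast (by linarith [hconc i hi] :
      ((w (i + 2)).2 - (w (i + 1)).2) * ((w (i + 1)).1 - (w i).1) <
        ((w (i + 1)).2 - (w i).2) * ((w (i + 2)).1 - (w (i + 1)).1))
  have hIic {i : ℕ} (hi : i < m) : i ∈ Set.Iic (m - 1) := Set.mem_Iic.2 (by omega)
  have he_inj : Set.InjOn e (range m) := fun i hi j hj hij => by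
    rw [coe_range, Set.mem_Iio] at hi hj
    exact hσ.injOn (hIic hi) (hIic hj) (by simp only [σ, hij])
  obtain ⟨p, hpm, hup, hdown⟩ :=
    exists_sign_split_of_antitoneOn σ (hσ.antitoneOn.mono fun i hi => hIic hi)
  have hbabs : ∑ i ∈ range m, |(e i).2| = (w p).2 - (w 0).2 + ((w p).2 - (w m).2) := by
    refine sum_abs_sub_eq_of_unimodal (fun i => (w i).2) hpm (fun i hi => ?_) fun i hpi him => ?_
    · have := (le_div_iff₀ (he1 i (by omega))).1 (hup i hi)
      simp only [he, Prod.snd_sub, zero_mul] at this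
      exact sub_nonneg.1 (by exact_mod_cast this)
    · have := (div_lt_iff₀ (he1 i him)).1 (hdown i hpi him)
      simp only [he, Prod.snd_sub, zero_mul] at this
      exact (sub_neg.1 (by exact_mod_cast this)).le
  have hsum : ∑ v ∈ (range m).image e, ((v.1 + |v.2| : ℤ) : ℝ) ≤ 3 * D := by
    have hw : ∑ i ∈ range m, (e i).1 = (w m).1 - (w 0).1 := sum_range_sub (fun i => (w i).1) m
    rw [sum_image he_inj, ← Int.cast_sum, sum_add_distrib, hbabs, hw]
    push_cast
    linarith [hheight p hpm 0 (Nat.zero_le _), hheight p hpm m le_rfl]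
  have hright (v : ℤ × ℤ) (hv : v ∈ (range m).image e) : 0 < v.1 := by
    obtain ⟨i, hi, rfl⟩ := mem_image.1 hv
    exact_mod_cast he1 i (mem_range.1 hi)
  have := add_one_pow_three_le_of_sum_le ((range m).image e) hright D hD hsum
  rwa [card_image_of_injOn he_inj, card_range] at this

lemma Finset.exists_seq_mem_and_lt_succ {α β : Type*} [LinearOrder β] (U : Finset α) (f : α → β)
    (hf : Set.InjOn f U) {m : ℕ} (hm : #U = m + 1) :
    ∃ u : ℕ → α, (∀ i ≤ m, u i ∈ U) ∧ ∀ i < m, f (u i) < f (u (i + 1)) := by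
  classical
  let g := (U.image f).orderEmbOfFin ((card_image_of_injOn hf).trans hm)
  have hg (i : Fin (m + 1)) : ∃ z ∈ U, f z = g i := mem_image.1 (orderEmbOfFin_mem _ _ i)
  choose u huU hu using hg
  refine ⟨fun i => u ⟨min i m, by omega⟩, fun i _ => huU _, fun i hi => ?_⟩
  rw [hu, hu]
  exact g.strictMono (Fin.mk_lt_mk.2 (by omega))

lemma le_of_pow_three_le_fiftyFour_mul_sq {n D : ℝ} (hD : 0 ≤ D) (h : n ^ 3 ≤ 54 * D ^ 2) :
    n ≤ 3 * 2 ^ ((1 : ℝ) / 3) * D ^ ((2 : ℝ) / 3) := by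
  have hcube : (3 * (2 : ℝ) ^ ((1 : ℝ) / 3) * D ^ ((2 : ℝ) / 3)) ^ 3 = 54 * D ^ 2 := by
    rw [mul_pow, mul_pow, ← Real.rpow_natCast (2 ^ _), ← Real.rpow_natCast (D ^ _),
      ← Real.rpow_mul zero_le_two, ← Real.rpow_mul hD]
    norm_num
  exact le_of_pow_le_pow_left₀ three_ne_zero (by positivity) (hcube ▸ h)

lemma card_le_of_strictConcave {α : Type*} (U : Finset α) (x y : α → ℤ) (D : ℝ) (hD : 1 ≤ D)
    (hx : Set.InjOn x U)
    (hconc : ∀ u ∈ U, ∀ v ∈ U, ∀ w ∈ U, x u < x v → x v < x w →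
      (x v - x u) * (y w - y v) < (x w - x v) * (y v - y u))
    (hwidth : ∀ u ∈ U, ∀ v ∈ U, (x u : ℝ) - x v ≤ D)
    (hheight : ∀ u ∈ U, ∀ v ∈ U, (y u : ℝ) - y v ≤ D) :
    (#U : ℝ) ≤ 3 * 2 ^ ((1 : ℝ) / 3) * D ^ ((2 : ℝ) / 3) := by
  refine le_of_pow_three_le_fiftyFour_mul_sq (by linarith) ?_
  rcases Nat.eq_zero_or_pos #U with hU | hU
  · rw [hU]; norm_num; positivity
  obtain ⟨m, hm⟩ := Nat.exists_eq_add_one_of_ne_zero hU.ne'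
  obtain ⟨u, huU, hu⟩ := U.exists_seq_mem_and_lt_succ x hx hm
  rw [hm, Nat.cast_add_one]
  exact add_one_pow_three_le_of_strictConcave_seq _ (fun i => (x (u i), y (u i))) D hD hu
    (fun i hi => hconc _ (huU _ (by omega)) _ (huU _ (by omega)) _ (huU _ (by omega))
      (hu _ (by omega)) (hu _ (by omega)))
    (hwidth _ (huU _ le_rfl) _ (huU _ (Nat.zero_le _)))
    (fun i hi j hj => hheight _ (huU i hi) _ (huU j hj))

@[simp] lemma latticeEmbed_apply_zero (z : ℤ × ℤ) : latticeEmbed z 0 = z.1 := rfl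

@[simp] lemma latticeEmbed_apply_one (z : ℤ × ℤ) : latticeEmbed z 1 = z.2 := rfl

lemma latticeEmbed_injective : Function.Injective latticeEmbed := fun z w h => by
  have h0 := congrArg (· 0) h
  have h1 := congrArg (· 1) h
  simp only [latticeEmbed_apply_zero, latticeEmbed_apply_one, Int.cast_inj] at h0 h1
  exact Prod.ext h0 h1

lemma abs_sub_le_of_latticeEmbed_mem {C : Set ℝ²} {D : ℝ}
    (hdist : ∀ p ∈ C, ∀ q ∈ C, dist p q ≤ D) {z w : ℤ × ℤ} (hz : latticeEmbed z ∈ C)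
    (hw : latticeEmbed w ∈ C) : |(z.1 - w.1 : ℝ)| ≤ D ∧ |(z.2 - w.2 : ℝ)| ≤ D := by
  have coord (i : Fin 2) := (PiLp.dist_apply_le (latticeEmbed z) (latticeEmbed w) i).trans
    (hdist _ hz _ hw)
  exact ⟨by simpa [Real.dist_eq] using coord 0, by simpa [Real.dist_eq] using coord 1⟩

lemma EuclideanSpace.ext_fin_two {p q : ℝ²} (h0 : p 0 = q 0) (h1 : p 1 = q 1) : p = q := by
  ext i; fin_cases i <;> assumption

lemma top_or_bottom_of_mem_extremePoints {C : Set ℝ²} {q : ℝ²}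
    (hq : q ∈ Set.extremePoints ℝ C) :
    (∀ c ∈ C, c 0 = q 0 → c 1 ≤ q 1) ∨ ∀ c ∈ C, c 0 = q 0 → q 1 ≤ c 1 := by
  by_contra! ⟨⟨c, hc, hc0, hc1⟩, ⟨c', hc', hc'0, hc'1⟩⟩
  have hden : 0 < c 1 - c' 1 := by linarith
  set t := (q 1 - c' 1) / (c 1 - c' 1)
  have hq_mem : q ∈ openSegment ℝ c c' := by
    refine ⟨t, 1 - t, div_pos (by linarith) hden, ?_, by ring, ?_⟩
    · rw [sub_pos, div_lt_one hden]; linarith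
    · refine EuclideanSpace.ext_fin_two ?_ ?_ <;>
        simp only [PiLp.add_apply, PiLp.smul_apply, smul_eq_mul, t]
      · rw [hc0, hc'0]; ring
      · field_simp; ring
  have := ((mem_extremePoints.1 hq).2 c hc c' hc' hq_mem).1
  exact hc1.ne' (congrArg (· 1) this)

lemma exists_chord_point {C : Set ℝ²} (hC : Convex ℝ C) {p q r : ℝ²} (hp : p ∈ C) (hr : r ∈ C)
    (hq : q ∈ Set.extremePoints ℝ C) (hpq : p 0 < q 0) (hqr : q 0 < r 0) :
    ∃ c ∈ C, c 0 = q 0 ∧ c 1 ≠ q 1 ∧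
      (r 0 - p 0) * c 1 = (r 0 - q 0) * p 1 + (q 0 - p 0) * r 1 := by
  have hden : 0 < r 0 - p 0 := by linarith
  set t := (r 0 - q 0) / (r 0 - p 0)
  have ht0 : 0 < t := div_pos (by linarith) hden
  have ht1 : 0 < 1 - t := by rw [sub_pos, div_lt_one hden]; linarith
  have hc0 : (t • p + (1 - t) • r) 0 = q 0 := by
    simp only [PiLp.add_apply, PiLp.smul_apply, smul_eq_mul, t]; field_simp; ring
  refine ⟨t • p + (1 - t) • r, hC hp hr ht0.le ht1.le (by ring), hc0, fun hc1 => ?_, ?_⟩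
  · have hq_mem : q ∈ openSegment ℝ p r :=
      ⟨t, 1 - t, ht0, ht1, by ring, EuclideanSpace.ext_fin_two hc0 hc1⟩
    have := ((mem_extremePoints.1 hq).2 p hp r hr hq_mem).1
    exact hpq.ne (congrArg (· 0) this)
  · simp only [PiLp.add_apply, PiLp.smul_apply, smul_eq_mul, t]; field_simp; ring

lemma card_le_of_extreme_highest {C : Set ℝ²} (hC : Convex ℝ C) {D : ℝ} (hD : 1 ≤ D)
    (hdist : ∀ p ∈ C, ∀ q ∈ C, dist p q ≤ D) (ε : ℤ) (hε : |ε| = 1) (U : Finset (ℤ × ℤ))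
    (hU : ∀ z ∈ U, latticeEmbed z ∈ Set.extremePoints ℝ C ∧
      ∀ c ∈ C, c 0 = z.1 → ε * c 1 ≤ ε * z.2) :
    (#U : ℝ) ≤ 3 * 2 ^ ((1 : ℝ) / 3) * D ^ ((2 : ℝ) / 3) := by
  have hε0 : (ε : ℝ) ≠ 0 := by rw [Int.cast_ne_zero]; rintro rfl; simp at hε
  have hUC (z : ℤ × ℤ) (hz : z ∈ U) : latticeEmbed z ∈ C := (hU z hz).1.1
  have hdiff {z w : ℤ × ℤ} (hz : z ∈ U) (hw : w ∈ U) :=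
    abs_sub_le_of_latticeEmbed_mem hdist (hUC z hz) (hUC w hw)
  apply card_le_of_strictConcave U Prod.fst (fun z => ε * z.2) D hD
  · intro z hz w hw h
    have hzw := (hU z hz).2 _ (hUC w hw) (by simp [h])
    have hwz := (hU w hw).2 _ (hUC z hz) (by simp [h])
    simp only [latticeEmbed_apply_one] at hzw hwz
    exact Prod.ext h (by exact_mod_cast mul_left_cancel₀ hε0 (le_antisymm hwz hzw))
  · intro z₁ h₁ z₂ h₂ z₃ h₃ h₁₂ h₂₃
    obtain ⟨c, hc, hc0, hc1, hchord⟩ := exists_chord_point hC (hUC _ h₁) (hUC _ h₃)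
      (hU _ h₂).1 (by simpa) (by simpa)
    simp only [latticeEmbed_apply_zero, latticeEmbed_apply_one] at hc0 hc1 hchord
    have hlt : ε * c 1 < ε * z₂.2 :=
      lt_of_le_of_ne ((hU _ h₂).2 c hc hc0) ((mul_right_injective₀ hε0).ne hc1)
    have hx : (0 : ℝ) < z₃.1 - z₁.1 := by rw [sub_pos, Int.cast_lt]; omega
    have := mul_lt_mul_of_pos_left hlt hx
    have := congrArg ((ε : ℝ) * ·) hchord
    exact_mod_cast (by linarith : ((z₂.1 : ℝ) - z₁.1) * (ε * z₃.2 - ε * z₂.2) <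
      (z₃.1 - z₂.1) * (ε * z₂.2 - ε * z₁.2))
  · exact fun z hz w hw => (le_abs_self _).trans (hdiff hz hw).1
  · intro z hz w hw
    push_cast
    rw [← mul_sub]
    refine (le_abs_self _).trans ?_
    rw [abs_mul, ← Int.cast_abs, hε, Int.cast_one, one_mul]
    exact (hdiff hz hw).2

theorem stmt0_general (S : Finset (ℤ × ℤ))
    (C : Set (EuclideanSpace ℝ (Fin 2)))
    (hC : C = convexHull ℝ (latticeEmbed '' (S : Set (ℤ × ℤ))))
    (D : ℝ) (hD : D = Metric.diam C) (hD1 : 1 ≤ D) :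
    ((Set.extremePoints ℝ C).ncard : ℝ) ≤ 6 * (2 : ℝ) ^ ((1:ℝ)/3) * D ^ ((2:ℝ)/3) := by
  classical
  have hconv : Convex ℝ C := hC ▸ convex_convexHull ℝ _
  have hbdd : Bornology.IsBounded C :=
    hC ▸ ((S.finite_toSet.image _).isCompact_convexHull (𝕜 := ℝ)).isBounded
  have hdist : ∀ p ∈ C, ∀ q ∈ C, dist p q ≤ D := fun p hp q hq =>
    hD ▸ Metric.dist_le_diam_of_mem hbdd hp hq
  set W := {z ∈ S | latticeEmbed z ∈ Set.extremePoints ℝ C}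
  have hW : Set.extremePoints ℝ C = latticeEmbed '' W := by
    refine subset_antisymm (fun v hv => ?_) (Set.image_subset_iff.2 fun z hz => (mem_filter.1 hz).2)
    obtain ⟨z, hz, rfl⟩ := (hC ▸ extremePoints_convexHull_subset : Set.extremePoints ℝ C ⊆ _) hv
    exact ⟨z, mem_filter.2 ⟨hz, hv⟩, rfl⟩
  set top := {z ∈ W | ∀ c ∈ C, c 0 = z.1 → c 1 ≤ z.2}
  set bottom := {z ∈ W | ∀ c ∈ C, c 0 = z.1 → z.2 ≤ c 1}
  have hsplit : W ⊆ top ∪ bottom := fun z hz => by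
    have := top_or_bottom_of_mem_extremePoints (mem_filter.1 hz).2
    simp only [latticeEmbed_apply_zero, latticeEmbed_apply_one] at this
    exact this.elim (fun h => mem_union_left _ (mem_filter.2 ⟨hz, h⟩))
      fun h => mem_union_right _ (mem_filter.2 ⟨hz, h⟩)
  have hext {P : ℤ × ℤ → Prop} [DecidablePred P] (z : ℤ × ℤ) (hz : z ∈ {z ∈ W | P z}) :
      latticeEmbed z ∈ Set.extremePoints ℝ C := (mem_filter.1 (mem_filter.1 hz).1).2
  rw [hW, Set.ncard_image_of_injective _ latticeEmbed_injective, Set.ncard_coe_finset]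
  calc (#W : ℝ) ≤ #top + #bottom := by
        exact_mod_cast (card_le_card hsplit).trans (card_union_le _ _)
    _ ≤ 3 * 2 ^ ((1 : ℝ) / 3) * D ^ ((2 : ℝ) / 3) + 3 * 2 ^ ((1 : ℝ) / 3) * D ^ ((2 : ℝ) / 3) :=
        add_le_add
          (card_le_of_extreme_highest hconv hD1 hdist 1 abs_one top fun z hz =>
            ⟨hext z hz, by simpa using (mem_filter.1 hz).2⟩)
          (card_le_of_extreme_highest hconv hD1 hdist (-1) (by simp) bottom fun z hz =>
            ⟨hext z hz, by simpa using (mem_filter.1 hz).2⟩)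
    _ = 6 * (2 : ℝ) ^ ((1:ℝ)/3) * D ^ ((2:ℝ)/3) := by ring

/-- A convex polygon whose vertices are lattice points and whose diameter is
`D ≥ 1` has at most `6 · 2^(1/3) · D^(2/3)` vertices (extreme points). -/
theorem stmt0 (S : Finset (ℤ × ℤ)) (hS : S.Nonempty)
    (C : Set (EuclideanSpace ℝ (Fin 2)))
    (hC : C = convexHull ℝ (latticeEmbed '' (S : Set (ℤ × ℤ))))
    (D : ℝ) (hD : D = Metric.diam C) (hD1 : 1 ≤ D) :
    ((Set.extremePoints ℝ C).ncard : ℝ) ≤ 6 * (2 : ℝ) ^ ((1:ℝ)/3) * D ^ ((2:ℝ)/3) :=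
  stmt0_general S C hC D hD hD1
end

section
/- Let r > 0 be irrational with geometric convergents pᵢ = (bᵢ, aᵢ) ∈ ℤ², where aᵢ/bᵢ are the continued fraction convergents of r. Then for every i ≥ 0, the triangle with vertices the origin o, pᵢ, and p_{i+1} contains no lattice point other than its three vertices. -/
/-- For an irrational `r > 0`, with geometric convergents defined by
`P 0 = p₋₂ = (1,0)`, `P 1 = p₋₁ = (0,1)`, `P (i+2) = pᵢ = qᵢ • p_{i-1} + p_{i-2}`
where `qᵢ` are the partial quotients of `r`, the triangle with vertices the
origin, `pᵢ` and `p_{i+1}` contains no lattice points other than its vertices. -/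
theorem stmt5 (r : ℝ) (hr : 0 < r) (hirr : Irrational r)
    (x : ℕ → ℝ) (hx0 : x 0 = r)
    (hxrec : ∀ i, x (i + 1) = 1 / (x i - ⌊x i⌋))
    (q : ℕ → ℤ) (hq : ∀ i, q i = ⌊x i⌋)
    (P : ℕ → ℤ × ℤ) (hP0 : P 0 = (1, 0)) (hP1 : P 1 = (0, 1))
    (hPrec : ∀ i, P (i + 2) = q i • P (i + 1) + P i)
    (i : ℕ) (z : ℤ × ℤ)
    (hz : (((z.1 : ℝ), (z.2 : ℝ)) : ℝ × ℝ) ∈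
      convexHull ℝ {((0 : ℝ), (0 : ℝ)),
        (((P (i + 2)).1 : ℝ), ((P (i + 2)).2 : ℝ)),
        (((P (i + 3)).1 : ℝ), ((P (i + 3)).2 : ℝ))}) :
    z = 0 ∨ z = P (i + 2) ∨ z = P (i + 3) := by
  -- determinant of consecutive convergents is ±1
  have hdet : ∀ n, (P n).1 * (P (n+1)).2 - (P n).2 * (P (n+1)).1 = 1 ∨
      (P n).1 * (P (n+1)).2 - (P n).2 * (P (n+1)).1 = -1 := by
    intro n
    induction n with
    | zero => left; rw [hP0, hP1]; norm_num
    | succ k ih =>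
      have h : P (k+1+1) = q k • P (k+1) + P k := hPrec k
      have h1 : (P (k+1+1)).1 = q k * (P (k+1)).1 + (P k).1 := by rw [h]; rfl
      have h2 : (P (k+1+1)).2 = q k * (P (k+1)).2 + (P k).2 := by rw [h]; rfl
      have : (P (k+1)).1 * (P (k+1+1)).2 - (P (k+1)).2 * (P (k+1+1)).1
          = -((P k).1 * (P (k+1)).2 - (P k).2 * (P (k+1)).1) := by
        rw [h1, h2]; ring
      omega
  set u := P (i+2) with hu
  set v := P (i+3) with hv
  obtain hD := hdet (i+2)
  set D : ℤ := u.1 * v.2 - u.2 * v.1 with hDdef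
  -- decompose the convex hull membership
  rw [show ({((0:ℝ),(0:ℝ)), ((u.1:ℝ), (u.2:ℝ)), ((v.1:ℝ), (v.2:ℝ))} : Set (ℝ×ℝ))
      = insert ((0:ℝ),(0:ℝ)) {((u.1:ℝ), (u.2:ℝ)), ((v.1:ℝ), (v.2:ℝ))} from rfl,
    convexHull_insert ⟨_, Set.mem_insert _ _⟩, convexHull_pair] at hz
  rw [mem_convexJoin] at hz
  obtain ⟨o, ho, w, hw, hzw⟩ := hz
  rw [Set.mem_singleton_iff] at ho
  subst ho
  obtain ⟨a, b, ha, hb, hab, rfl⟩ := hw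
  obtain ⟨c, d, hc, hd, hcd, hzeq⟩ := hzw
  have he : ((z.1:ℝ), (z.2:ℝ)) = (d*a) • ((u.1:ℝ), (u.2:ℝ)) + (d*b) • ((v.1:ℝ), (v.2:ℝ)) := by
    rw [← hzeq]
    simp only [Prod.smul_mk, Prod.mk_add_mk, smul_eq_mul, Prod.mk.injEq]
    constructor <;> ring
  set s : ℝ := d * a with hs
  set t : ℝ := d * b with ht
  have hs0 : 0 ≤ s := mul_nonneg hd ha
  have ht0 : 0 ≤ t := mul_nonneg hd hb
  have hst1 : s + t ≤ 1 := by
    have : s + t = d := by rw [hs, ht]; nlinarith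
    linarith
  have he1 : (z.1 : ℝ) = s * u.1 + t * v.1 := by
    have := congrArg Prod.fst he; simpa using this
  have he2 : (z.2 : ℝ) = s * u.2 + t * v.2 := by
    have := congrArg Prod.snd he; simpa using this
  -- s and t are integers
  set m : ℤ := z.1 * v.2 - z.2 * v.1 with hm
  set n : ℤ := u.1 * z.2 - u.2 * z.1 with hn
  have hsD : s * (D:ℝ) = (m:ℝ) := by
    push_cast [hm, hDdef]
    linear_combination (v.1:ℝ) * he2 - (v.2:ℝ) * he1
  have htD : t * (D:ℝ) = (n:ℝ) := by
    push_cast [hn, hDdef]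
    linear_combination (u.2:ℝ) * he1 - (u.1:ℝ) * he2
  have hD2 : (D:ℝ) * (D:ℝ) = 1 := by rcases hD with h | h <;> rw [h] <;> norm_num
  have hsval : s = ((m * D : ℤ) : ℝ) := by
    push_cast
    calc s = s * ((D:ℝ) * (D:ℝ)) := by rw [hD2]; ring
    _ = (m:ℝ) * (D:ℝ) := by rw [← mul_assoc, hsD]
  have htval : t = ((n * D : ℤ) : ℝ) := by
    push_cast
    calc t = t * ((D:ℝ) * (D:ℝ)) := by rw [hD2]; ring
    _ = (n:ℝ) * (D:ℝ) := by rw [← mul_assoc, htD]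
  set s' : ℤ := m * D
  set t' : ℤ := n * D
  have hs'0 : 0 ≤ s' := by exact_mod_cast hsval ▸ hs0
  have ht'0 : 0 ≤ t' := by exact_mod_cast htval ▸ ht0
  have hst' : s' + t' ≤ 1 := by
    have : ((s' + t' : ℤ) : ℝ) ≤ 1 := by push_cast; rw [← hsval, ← htval]; exact hst1
    exact_mod_cast this
  have hz1 : z.1 = s' * u.1 + t' * v.1 := by
    have : (z.1 : ℝ) = ((s' * u.1 + t' * v.1 : ℤ) : ℝ) := by
      push_cast; rw [← hsval, ← htval]; exact he1
    exact_mod_cast this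
  have hz2 : z.2 = s' * u.2 + t' * v.2 := by
    have : (z.2 : ℝ) = ((s' * u.2 + t' * v.2 : ℤ) : ℝ) := by
      push_cast; rw [← hsval, ← htval]; exact he2
    exact_mod_cast this
  have hcase : (s' = 0 ∧ t' = 0) ∨ (s' = 1 ∧ t' = 0) ∨ (s' = 0 ∧ t' = 1) := by omega
  rcases hcase with ⟨h1, h2⟩ | ⟨h1, h2⟩ | ⟨h1, h2⟩
  · left; rw [h1, h2] at hz1 hz2; simp at hz1 hz2
    exact Prod.ext hz1 hz2
  · right; left; rw [h1, h2] at hz1 hz2; simp at hz1 hz2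
    exact Prod.ext hz1 hz2
  · right; right; rw [h1, h2] at hz1 hz2; simp at hz1 hz2
    exact Prod.ext hz1 hz2
end

section
/- Let ρ = (b, a) ∈ ℤ² with a, b > 0 and gcd(a,b) = 1, and let ρ₀, …, ρ_n = ρ be the geometric convergents of a/b (with ρ_{−2} = (1,0), ρ_{−1} = (0,1)). Then for every i with 0 ≤ i ≤ n, the segment from ρᵢ to ρᵢ + ρ_{i−1} intersects the segment from the origin o to ρ. -/
set_option maxHeartbeats 1000000


/-- Let `ρ = (b, a)` with `a, b > 0` coprime, and let the geometric convergents
of `a/b` be given by `ρ₋₂ = P 0 = (1,0)`, `ρ₋₁ = P 1 = (0,1)`,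
`ρᵢ = P (i+2) = qᵢ • ρ_{i-1} + ρ_{i-2}` with partial quotients `qᵢ ≥ 1` for
`i ≥ 1`, and `ρ_n = ρ`.  Then for every `0 ≤ i ≤ n` the segment from `ρᵢ` to
`ρᵢ + ρ_{i-1}` intersects the segment from the origin to `ρ`. -/
theorem stmt10 (a b : ℤ) (ha : 0 < a) (hb : 0 < b) (hcop : Int.gcd a b = 1)
    (n : ℕ) (q : ℕ → ℤ) (hq0 : 0 ≤ q 0) (hq : ∀ i, 1 ≤ i → i ≤ n → 1 ≤ q i)
    (P : ℕ → ℤ × ℤ) (hP0 : P 0 = (1, 0)) (hP1 : P 1 = (0, 1))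
    (hPrec : ∀ i ≤ n, P (i + 2) = q i • P (i + 1) + P i)
    (hPn : P (n + 2) = (b, a))
    (i : ℕ) (hi : i ≤ n) :
    (segment ℝ ((((P (i + 2)).1 : ℝ), ((P (i + 2)).2 : ℝ)) : ℝ × ℝ)
        ((((P (i + 2) + P (i + 1)).1 : ℝ), ((P (i + 2) + P (i + 1)).2 : ℝ)) : ℝ × ℝ) ∩
      segment ℝ (((0 : ℝ), (0 : ℝ)) : ℝ × ℝ) (((b : ℝ), (a : ℝ)) : ℝ × ℝ)).Nonempty := by
  have hrec : ∀ j ≤ n, (P (j+2)).1 = q j * (P (j+1)).1 + (P j).1 ∧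
      (P (j+2)).2 = q j * (P (j+1)).2 + (P j).2 := by
    intro j hj
    rw [hPrec j hj]
    constructor <;> simp [Prod.fst_add, Prod.snd_add]
  have hqnn : ∀ j ≤ n, 0 ≤ q j := by
    intro j hj
    rcases Nat.eq_zero_or_pos j with h | h
    · subst h; exact hq0
    · linarith [hq j h hj]
  -- nonnegativity of coordinates
  have nonneg : ∀ j, j ≤ n+2 → 0 ≤ (P j).1 ∧ 0 ≤ (P j).2 := by
    intro j
    induction j using Nat.strong_induction_on with
    | _ j ih =>
      match j with
      | 0 => intro _; rw [hP0]; constructor <;> norm_num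
      | 1 => intro _; rw [hP1]; constructor <;> norm_num
      | (k+2) =>
        intro hk
        have h1 := ih (k+1) (by omega) (by omega)
        have h0 := ih k (by omega) (by omega)
        have hr := hrec k (by omega)
        have hqk := hqnn k (by omega)
        constructor
        · rw [hr.1]; nlinarith [h1.1, h0.1]
        · rw [hr.2]; nlinarith [h1.2, h0.2]
  -- determinant identity
  have det : ∀ j ≤ n+1, (P j).1 * (P (j+1)).2 - (P j).2 * (P (j+1)).1 = (-1:ℤ)^j := by
    intro j
    induction j with
    | zero => intro _; rw [hP0, hP1]; norm_num
    | succ k ih =>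
      intro hk
      have hr := hrec k (by omega)
      have := ih (by omega)
      rw [hr.1, hr.2]
      rw [pow_succ]
      linarith [this]
  set E : ℕ → ℤ := fun j => (-1:ℤ)^j * ((P j).1 * a - (P j).2 * b) with hE
  have hEn2 : E (n+2) = 0 := by
    simp only [hE, hPn]; ring
  have hEn1 : E (n+1) = 1 := by
    have hd := det (n+1) (le_refl _)
    rw [hPn] at hd
    simp only [hE]
    have : (P (n+1)).1 * a - (P (n+1)).2 * b = (-1:ℤ)^(n+1) := by linarith [hd]
    rw [this, ← pow_add, ← two_mul, pow_mul]
    norm_num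
  have Erec : ∀ j ≤ n, E j = q j * E (j+1) + E (j+2) := by
    intro j hj
    have hr := hrec j hj
    simp only [hE, hr.1, hr.2, pow_succ]
    ring
  -- backward positivity
  have key : ∀ m, m ≤ n → 1 ≤ E (n+1-m) ∧ 0 ≤ E (n+2-m) := by
    intro m
    induction m with
    | zero => intro _; simp [hEn1, hEn2]
    | succ k ih =>
      intro hk
      obtain ⟨h1, h2⟩ := ih (by omega)
      have hj1 : n + 1 - k = (n - k) + 1 := by omega
      have hj2 : n + 2 - k = (n - k) + 2 := by omega
      rw [hj1] at h1
      rw [hj2] at h2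
      have hjn : n - k ≤ n := by omega
      have her := Erec (n - k) hjn
      have hq' : 1 ≤ q (n - k) := hq (n - k) (by omega) hjn
      constructor
      · have hg : n + 1 - (k+1) = n - k := by omega
        rw [hg, her]; nlinarith
      · have hg : n + 2 - (k+1) = (n - k) + 1 := by omega
        rw [hg]; linarith
  have he1 : 1 ≤ E (i+1) := by
    have := (key (n - i) (by omega)).1
    have h : n + 1 - (n - i) = i + 1 := by omega
    rwa [h] at this
  have he2 : 0 ≤ E (i+2) := by
    rcases eq_or_lt_of_le hi with h | h
    · subst h; rw [hEn2]
    · have := (key (n - i - 1) (by omega)).1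
      have heq : n + 1 - (n - i - 1) = i + 2 := by omega
      rw [heq] at this; linarith
  have hle : E (i+2) ≤ E (i+1) := by
    rcases eq_or_lt_of_le hi with h | h
    · subst h; rw [hEn2, hEn1]; norm_num
    · have her := Erec (i+1) (by omega)
      have hq' : 1 ≤ q (i+1) := hq (i+1) (by omega) (by omega)
      have e3 : 0 ≤ E (i+3) := by
        have := (key (n - i - 1) (by omega)).2
        have heq : n + 2 - (n - i - 1) = i + 3 := by omega
        rwa [heq] at this
      rw [her]; nlinarith
  -- x-coordinate bound: for i < n
  have hxmono : i < n → (P (i+2)).1 + (P (i+1)).1 ≤ (P (n+2)).1 := by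
    intro hlt
    have main : ∀ j, i+1 ≤ j → j ≤ n → (P (i+2)).1 + (P (i+1)).1 ≤ (P (j+2)).1 := by
      intro j hij
      induction j, hij using Nat.le_induction with
      | base =>
        intro hjn
        have hr := hrec (i+1) hjn
        have hq' : 1 ≤ q (i+1) := hq (i+1) (by omega) hjn
        have h2 := (nonneg (i+2) (by omega)).1
        rw [hr.1]; nlinarith
      | succ j hij ih =>
        intro hjn
        have prev := ih (by omega)
        have hr := hrec (j+1) hjn
        have hq' : 1 ≤ q (j+1) := hq (j+1) (by omega) hjn
        have h2 := (nonneg (j+2) (by omega)).1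
        have h1 := (nonneg (j+1) (by omega)).1
        rw [hr.1]; nlinarith
    exact main n (by omega) (le_refl n)
  -- now the real construction
  set X2 : ℝ := ((P (i+2)).1 : ℝ) with hX2
  set Y2 : ℝ := ((P (i+2)).2 : ℝ) with hY2
  set X1 : ℝ := ((P (i+1)).1 : ℝ) with hX1
  set Y1 : ℝ := ((P (i+1)).2 : ℝ) with hY1
  have hE1pos : (0:ℝ) < (E (i+1) : ℝ) := by exact_mod_cast lt_of_lt_of_le zero_lt_one he1
  set t : ℝ := (E (i+2) : ℝ) / (E (i+1) : ℝ) with htdef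
  have ht0 : 0 ≤ t := div_nonneg (by exact_mod_cast he2) (le_of_lt hE1pos)
  have ht1 : t ≤ 1 := by
    rw [div_le_one hE1pos]; exact_mod_cast hle
  have hteq : t * (E (i+1) : ℝ) = (E (i+2) : ℝ) := by
    rw [htdef]; field_simp
  -- cross product identity
  have hcross : (X2 + t * X1) * a = (Y2 + t * Y1) * b := by
    have hE2c : ((E (i+2) : ℤ) : ℝ) = (-1:ℝ)^(i+2) * (X2 * a - Y2 * b) := by
      simp only [hE, hX2, hY2]; push_cast; ring
    have hE1c : ((E (i+1) : ℤ) : ℝ) = (-1:ℝ)^(i+1) * (X1 * a - Y1 * b) := by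
      simp only [hE, hX1, hY1]; push_cast; ring
    have hc : ((-1:ℝ)^i) * ((-1:ℝ)^i) = 1 := by
      rw [← pow_add, ← two_mul, pow_mul]; norm_num
    rw [hE2c, hE1c] at hteq
    have h2 : (-1:ℝ)^(i+2) = (-1:ℝ)^i := by rw [pow_succ, pow_succ]; ring
    have h1 : (-1:ℝ)^(i+1) = -(-1:ℝ)^i := by rw [pow_succ]; ring
    rw [h2, h1] at hteq
    linear_combination (-((-1:ℝ)^i)) * hteq -
      (t*(X1*(a:ℝ) - Y1*(b:ℝ)) + (X2*(a:ℝ) - Y2*(b:ℝ))) * hc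
  -- nonnegativity
  have hX1n : 0 ≤ X1 := by rw [hX1]; exact_mod_cast (nonneg (i+1) (by omega)).1
  have hY1n : 0 ≤ Y1 := by rw [hY1]; exact_mod_cast (nonneg (i+1) (by omega)).2
  have hX2n : 0 ≤ X2 := by rw [hX2]; exact_mod_cast (nonneg (i+2) (by omega)).1
  have hY2n : 0 ≤ Y2 := by rw [hY2]; exact_mod_cast (nonneg (i+2) (by omega)).2
  -- bound on first coordinate of the point
  have hwb : X2 + t * X1 ≤ (b : ℝ) := by
    rcases eq_or_lt_of_le hi with h | h
    · subst h
      have ht0' : t = 0 := by rw [htdef, hEn2]; simp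
      rw [ht0', hX2, hPn]
      norm_num
    · have hm := hxmono h
      rw [hPn] at hm
      have : X2 + X1 ≤ (b : ℝ) := by rw [hX2, hX1]; exact_mod_cast hm
      nlinarith
  have hbR : (0:ℝ) < (b:ℝ) := by exact_mod_cast hb
  set s : ℝ := (X2 + t * X1) / b with hsdef
  have hs0 : 0 ≤ s := div_nonneg (by nlinarith) (le_of_lt hbR)
  have hs1 : s ≤ 1 := by rw [div_le_one hbR]; exact hwb
  refine ⟨(X2 + t * X1, Y2 + t * Y1), ?_, ?_⟩
  · -- first segment
    refine ⟨1 - t, t, by linarith, ht0, by ring, ?_⟩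
    rw [Prod.ext_iff]
    constructor
    · simp only [Prod.smul_mk, smul_eq_mul, Prod.fst_add, Prod.mk_add_mk]
      rw [hX2, hX1]; push_cast; ring
    · simp only [Prod.smul_mk, smul_eq_mul, Prod.snd_add, Prod.mk_add_mk]
      rw [hY2, hY1]; push_cast; ring
  · -- second segment
    refine ⟨1 - s, s, by linarith, hs0, by ring, ?_⟩
    have hsb : s * b = X2 + t * X1 := by
      rw [hsdef]; field_simp
    have hsa : s * a = Y2 + t * Y1 := by
      rw [hsdef]
      rw [div_mul_eq_mul_div, div_eq_iff (ne_of_gt hbR)]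
      linarith [hcross]
    rw [Prod.ext_iff]
    constructor
    · simp only [Prod.smul_mk, smul_eq_mul, Prod.fst_add, Prod.mk_add_mk]
      rw [← hsb]; ring
    · simp only [Prod.smul_mk, smul_eq_mul, Prod.snd_add, Prod.mk_add_mk]
      rw [← hsa]; ring
end

section
/- Let D be a closed disk of radius r ≥ 1/√2 in the plane. Then D ∩ ℤ² is nonempty and lattice-connected. -/
/-- A set `S ⊆ ℤ²` is lattice-connected if the subgraph of the lattice graph
(vertices `ℤ²`, edges between lattice points at distance `1`) induced on `S`
is connected. -/
def LatticeConnected (S : Set (ℤ × ℤ)) : Prop :=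
  ∀ z ∈ S, ∀ w ∈ S, Relation.ReflTransGen
    (fun u v => u ∈ S ∧ v ∈ S ∧ (v.1 - u.1) ^ 2 + (v.2 - u.2) ^ 2 = 1) z w

/-!
The lattice point `c` obtained by rounding both coordinates of the centre `o` lies within `1/√2`
of `o`, hence in the disk. For a lattice point `a ≠ c` of the disk, a unit step from `a` towards
`c` in a coordinate where they differ does not increase the distance to `o`: since
`|oᵢ - cᵢ| ≤ 1/2`, the centre lies on the far side of the perpendicular bisector of that step.
Such steps decrease the `ℓ¹`-distance to `c`, so every lattice point of the disk walks to `c`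
inside the disk.
-/

def LatticeAdj (u v : ℤ × ℤ) : Prop :=
  (v.1 - u.1) ^ 2 + (v.2 - u.2) ^ 2 = 1

lemma LatticeAdj.symm {u v : ℤ × ℤ} (h : LatticeAdj u v) : LatticeAdj v u := by
  unfold LatticeAdj at *; linear_combination h

lemma latticeConnected_of_exists_adj_lt (S : Set (ℤ × ℤ)) (c : ℤ × ℤ) (f : ℤ × ℤ → ℕ)
    (h : ∀ z ∈ S, z ≠ c → ∃ w ∈ S, LatticeAdj z w ∧ f w < f z) :
    LatticeConnected S := by
  set R : ℤ × ℤ → ℤ × ℤ → Prop := fun u v => u ∈ S ∧ v ∈ S ∧ LatticeAdj u v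
  have reach : ∀ z ∈ S, Relation.ReflTransGen R z c := by
    intro z
    induction z using (measure f).wf.induction with
    | h z ih =>
      intro hz
      by_cases hzc : z = c
      · rw [hzc]
      obtain ⟨w, hw, hzw, hfw⟩ := h z hz hzc
      exact .head ⟨hz, hw, hzw⟩ (ih w hfw hw)
  have : Std.Symm R := ⟨fun _ _ ⟨hu, hv, huv⟩ => ⟨hv, hu, huv.symm⟩⟩
  intro z hz w hw
  exact (reach z hz).trans (Std.Symm.symm _ _ (reach w hw))

lemma exists_step_toward_of_abs_sub_le_half {a c : ℤ} {x : ℝ} (hc : |x - c| ≤ 1 / 2)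
    (hac : a ≠ c) :
    ∃ b : ℤ, (b - a) ^ 2 = 1 ∧ (b - c).natAbs < (a - c).natAbs ∧
      ((b : ℝ) - x) ^ 2 ≤ ((a : ℝ) - x) ^ 2 := by
  rw [abs_le] at hc
  rcases hac.lt_or_gt with h | h
  · refine ⟨a + 1, by ring, by omega, ?_⟩
    have : (a : ℝ) + 1 ≤ c := by exact_mod_cast h
    push_cast; nlinarith
  · refine ⟨a - 1, by ring, by omega, ?_⟩
    have : (c : ℝ) + 1 ≤ a := by exact_mod_cast h
    push_cast; nlinarith

lemma latticeEmbed_mem_closedBall_iff (o : EuclideanSpace ℝ (Fin 2)) {r : ℝ} (hr : 0 ≤ r)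
    (z : ℤ × ℤ) :
    latticeEmbed z ∈ Metric.closedBall o r ↔
      ((z.1 : ℝ) - o 0) ^ 2 + ((z.2 : ℝ) - o 1) ^ 2 ≤ r ^ 2 := by
  rw [Metric.mem_closedBall, EuclideanSpace.dist_eq, Fin.sum_univ_two, Real.sqrt_le_iff,
    and_iff_right hr]
  simp [latticeEmbed, Real.dist_eq, sq_abs]

/-- For a closed disk `D` of radius `r ≥ 1/√2`, the set `D ∩ ℤ²` is nonempty
and lattice-connected. -/
theorem stmt13 (o : EuclideanSpace ℝ (Fin 2)) (r : ℝ) (hr : 1 / Real.sqrt 2 ≤ r)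
    (S : Set (ℤ × ℤ)) (hS : S = {z | latticeEmbed z ∈ Metric.closedBall o r}) :
    S.Nonempty ∧ LatticeConnected S := by
  have hr2 : 1 / 2 ≤ r ^ 2 := by
    calc (1 : ℝ) / 2 = (1 / Real.sqrt 2) ^ 2 := by rw [div_pow, Real.sq_sqrt zero_le_two, one_pow]
      _ ≤ r ^ 2 := pow_le_pow_left₀ (by positivity) hr 2
  have mem_S (z : ℤ × ℤ) : z ∈ S ↔ ((z.1 : ℝ) - o 0) ^ 2 + ((z.2 : ℝ) - o 1) ^ 2 ≤ r ^ 2 := by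
    rw [hS]; exact latticeEmbed_mem_closedBall_iff o (le_trans (by positivity) hr) z
  set c : ℤ × ℤ := (round (o 0), round (o 1))
  have hc₁ : |o 0 - c.1| ≤ 1 / 2 := abs_sub_round (o 0)
  have hc₂ : |o 1 - c.2| ≤ 1 / 2 := abs_sub_round (o 1)
  have hcS : c ∈ S := by
    rw [mem_S]
    nlinarith [abs_le.1 hc₁, abs_le.1 hc₂]
  refine ⟨⟨c, hcS⟩, latticeConnected_of_exists_adj_lt S c
    (fun z => (z.1 - c.1).natAbs + (z.2 - c.2).natAbs) fun z hz hzc => ?_⟩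
  rw [mem_S] at hz
  by_cases h₁ : z.1 = c.1
  · obtain ⟨b, hb, hbc, hbo⟩ := exists_step_toward_of_abs_sub_le_half hc₂
      fun h₂ => hzc (Prod.ext h₁ h₂)
    refine ⟨(z.1, b), (mem_S _).2 (by dsimp only; linarith), ?_, ?_⟩
    · simp [LatticeAdj, hb]
    · dsimp only; omega
  · obtain ⟨b, hb, hbc, hbo⟩ := exists_step_toward_of_abs_sub_le_half hc₁ h₁
    refine ⟨(b, z.2), (mem_S _).2 (by dsimp only; linarith), ?_, ?_⟩
    · simp [LatticeAdj, hb]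
    · dsimp only; omega
end
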